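/- Let A and B be k-bialgebras and let τ : B⊗A → A⊗B be a twisting map. If the twisted tensor product A⊗_τ B, equipped with the induced multiplication, unit, comultiplication and counit, is a k-bialgebra, then (1_A⊗τ^{-1}⊗1_B)∘(Δ_A⊗Δ_B) = σ_{23}∘(Δ_A⊗Δ_B) as maps A⊗B → A⊗B⊗A⊗B, and (1_B⊗τ⊗1_A)∘(Δ_B⊗Δ_A) = σ_{23}∘(Δ_B⊗Δ_A) as maps B⊗A → B⊗A⊗B⊗A, where σ_{23} exchanges the second and third tensor factors. -/
import Mathlib


open scoped TensorProduct

namespace TTP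

section Defs

variable (k : Type*) [Field k]

section MidMap

variable {X P Q Y R S : Type*}
  [AddCommGroup X] [Module k X] [AddCommGroup P] [Module k P]
  [AddCommGroup Q] [Module k Q] [AddCommGroup Y] [Module k Y]
  [AddCommGroup R] [Module k R] [AddCommGroup S] [Module k S]

/-- The map `1_X ⊗ f ⊗ 1_Y` (with the canonical reassociations). -/
noncomputable def midMap (f : P ⊗[k] Q →ₗ[k] R ⊗[k] S) :
    (X ⊗[k] P) ⊗[k] (Q ⊗[k] Y) →ₗ[k] (X ⊗[k] R) ⊗[k] (S ⊗[k] Y) :=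
  (TensorProduct.assoc k (X ⊗[k] R) S Y).toLinearMap
    ∘ₗ TensorProduct.map (TensorProduct.assoc k X R S).symm.toLinearMap LinearMap.id
    ∘ₗ TensorProduct.map (TensorProduct.map LinearMap.id f) LinearMap.id
    ∘ₗ TensorProduct.map (TensorProduct.assoc k X P Q).toLinearMap LinearMap.id
    ∘ₗ (TensorProduct.assoc k (X ⊗[k] P) Q Y).symm.toLinearMap

end MidMap

variable {A B : Type*} [AddCommGroup A] [Module k A] [AddCommGroup B] [Module k B]

/-- `(A, mul, unit)` is a unital associative `k`-algebra (diagrammatically). -/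
def IsUnitalAssoc (mul : A ⊗[k] A →ₗ[k] A) (unit : k →ₗ[k] A) : Prop :=
  mul ∘ₗ TensorProduct.map unit LinearMap.id ∘ₗ (TensorProduct.lid k A).symm.toLinearMap
      = LinearMap.id
  ∧ mul ∘ₗ TensorProduct.map LinearMap.id unit ∘ₗ (TensorProduct.rid k A).symm.toLinearMap
      = LinearMap.id
  ∧ mul ∘ₗ TensorProduct.map mul LinearMap.id
      = mul ∘ₗ TensorProduct.map LinearMap.id mul ∘ₗ (TensorProduct.assoc k A A A).toLinearMap

/-- `(A, comul, counit)` is a counital coassociative `k`-coalgebra (diagrammatically). -/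
def IsCounitalCoassoc (comul : A →ₗ[k] A ⊗[k] A) (counit : A →ₗ[k] k) : Prop :=
  (TensorProduct.lid k A).toLinearMap ∘ₗ TensorProduct.map counit LinearMap.id ∘ₗ comul
      = LinearMap.id
  ∧ (TensorProduct.rid k A).toLinearMap ∘ₗ TensorProduct.map LinearMap.id counit ∘ₗ comul
      = LinearMap.id
  ∧ TensorProduct.map comul LinearMap.id ∘ₗ comul
      = (TensorProduct.assoc k A A A).symm.toLinearMap
          ∘ₗ TensorProduct.map LinearMap.id comul ∘ₗ comul

/-- `τ : B ⊗ A → A ⊗ B` is a twisting map for the algebras `A` and `B`: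
it is compatible with both units and with both multiplications. -/
def IsTwisting (mulA : A ⊗[k] A →ₗ[k] A) (unitA : k →ₗ[k] A)
    (mulB : B ⊗[k] B →ₗ[k] B) (unitB : k →ₗ[k] B)
    (τ : B ⊗[k] A →ₗ[k] A ⊗[k] B) : Prop :=
  τ ∘ₗ TensorProduct.map LinearMap.id unitA
      = TensorProduct.map unitA LinearMap.id ∘ₗ (TensorProduct.comm k B k).toLinearMap
  ∧ τ ∘ₗ TensorProduct.map unitB LinearMap.id
      = TensorProduct.map LinearMap.id unitB ∘ₗ (TensorProduct.comm k k A).toLinearMap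
  ∧ τ ∘ₗ TensorProduct.map mulB mulA
      = TensorProduct.map mulA mulB ∘ₗ midMap k τ ∘ₗ TensorProduct.map τ τ ∘ₗ midMap k τ

/-- The multiplication `(∇_A ⊗ ∇_B) ∘ (1 ⊗ τ ⊗ 1)` of the twisted tensor product. -/
noncomputable def tMul (mulA : A ⊗[k] A →ₗ[k] A) (mulB : B ⊗[k] B →ₗ[k] B)
    (τ : B ⊗[k] A →ₗ[k] A ⊗[k] B) :
    (A ⊗[k] B) ⊗[k] (A ⊗[k] B) →ₗ[k] A ⊗[k] B :=
  TensorProduct.map mulA mulB ∘ₗ midMap k τ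

/-- The unit `(η_A ⊗ η_B) ∘ (k ≅ k ⊗ k)` of the twisted tensor product. -/
noncomputable def tUnit (unitA : k →ₗ[k] A) (unitB : k →ₗ[k] B) : k →ₗ[k] A ⊗[k] B :=
  TensorProduct.map unitA unitB ∘ₗ (TensorProduct.lid k k).symm.toLinearMap

/-- The comultiplication `(1 ⊗ τ⁻¹ ⊗ 1) ∘ (Δ_A ⊗ Δ_B)` of the twisted tensor product. -/
noncomputable def tComul (comulA : A →ₗ[k] A ⊗[k] A) (comulB : B →ₗ[k] B ⊗[k] B)
    (τinv : A ⊗[k] B →ₗ[k] B ⊗[k] A) :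
    A ⊗[k] B →ₗ[k] (A ⊗[k] B) ⊗[k] (A ⊗[k] B) :=
  midMap k τinv ∘ₗ TensorProduct.map comulA comulB

/-- The counit `(k ⊗ k ≅ k) ∘ (ε_A ⊗ ε_B)` of the twisted tensor product. -/
noncomputable def tCounit (counitA : A →ₗ[k] k) (counitB : B →ₗ[k] k) :
    A ⊗[k] B →ₗ[k] k :=
  (TensorProduct.lid k k).toLinearMap ∘ₗ TensorProduct.map counitA counitB

/-- Compatibility of `τ` with the counits (diagram (5) of the paper). -/
def CounitCompat (counitA : A →ₗ[k] k) (counitB : B →ₗ[k] k)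
    (τ : B ⊗[k] A →ₗ[k] A ⊗[k] B) : Prop :=
  TensorProduct.map counitA LinearMap.id ∘ₗ τ
      = (TensorProduct.comm k B k).toLinearMap ∘ₗ TensorProduct.map LinearMap.id counitA
  ∧ TensorProduct.map LinearMap.id counitB ∘ₗ τ
      = (TensorProduct.comm k k A).toLinearMap ∘ₗ TensorProduct.map counitB LinearMap.id

/-- Compatibility of `τ` with the comultiplications (diagram (6) of the paper):
`(Δ_A ⊗ Δ_B)∘τ = (1⊗τ⊗1)∘(τ⊗τ)∘(1⊗τ⊗1)∘(Δ_B ⊗ Δ_A)`. -/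
def ComulCompat (comulA : A →ₗ[k] A ⊗[k] A) (comulB : B →ₗ[k] B ⊗[k] B)
    (τ : B ⊗[k] A →ₗ[k] A ⊗[k] B) : Prop :=
  TensorProduct.map comulA comulB ∘ₗ τ
      = midMap k τ ∘ₗ TensorProduct.map τ τ ∘ₗ midMap k τ ∘ₗ TensorProduct.map comulB comulA

/-- `(f ⊗ 1_B) ∘ τ = (1_A ⊗ τ) ∘ (τ ⊗ 1_A) ∘ (1_B ⊗ f)` for `f : A → A ⊗ A`. -/
def MidACompat (f : A →ₗ[k] A ⊗[k] A) (τ : B ⊗[k] A →ₗ[k] A ⊗[k] B) : Prop :=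
  TensorProduct.map f LinearMap.id ∘ₗ τ
    = (TensorProduct.assoc k A A B).symm.toLinearMap
      ∘ₗ TensorProduct.map LinearMap.id τ
      ∘ₗ (TensorProduct.assoc k A B A).toLinearMap
      ∘ₗ TensorProduct.map τ LinearMap.id
      ∘ₗ (TensorProduct.assoc k B A A).symm.toLinearMap
      ∘ₗ TensorProduct.map LinearMap.id f

/-- `(1_A ⊗ g) ∘ τ = (τ ⊗ 1_B) ∘ (1_B ⊗ τ) ∘ (g ⊗ 1_A)` for `g : B → B ⊗ B`. -/
def MidBCompat (g : B →ₗ[k] B ⊗[k] B) (τ : B ⊗[k] A →ₗ[k] A ⊗[k] B) : Prop :=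
  TensorProduct.map LinearMap.id g ∘ₗ τ
    = (TensorProduct.assoc k A B B).toLinearMap
      ∘ₗ TensorProduct.map τ LinearMap.id
      ∘ₗ (TensorProduct.assoc k B A B).symm.toLinearMap
      ∘ₗ TensorProduct.map LinearMap.id τ
      ∘ₗ (TensorProduct.assoc k B B A).toLinearMap
      ∘ₗ TensorProduct.map g LinearMap.id

/-- `(A, mul, unit, comul, counit)` is a Frobenius algebra (diagrammatically). -/
def IsFrobenius (mul : A ⊗[k] A →ₗ[k] A) (unit : k →ₗ[k] A)
    (comul : A →ₗ[k] A ⊗[k] A) (counit : A →ₗ[k] k) : Prop :=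
  IsUnitalAssoc k mul unit
  ∧ IsCounitalCoassoc k comul counit
  ∧ comul ∘ₗ mul
      = TensorProduct.map LinearMap.id mul ∘ₗ (TensorProduct.assoc k A A A).toLinearMap
          ∘ₗ TensorProduct.map comul LinearMap.id
  ∧ comul ∘ₗ mul
      = TensorProduct.map mul LinearMap.id ∘ₗ (TensorProduct.assoc k A A A).symm.toLinearMap
          ∘ₗ TensorProduct.map LinearMap.id comul

/-- `(A, mul, unit, comul, counit)` is a bialgebra (diagrammatically). -/
def IsBialgebra (mul : A ⊗[k] A →ₗ[k] A) (unit : k →ₗ[k] A)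
    (comul : A →ₗ[k] A ⊗[k] A) (counit : A →ₗ[k] k) : Prop :=
  IsUnitalAssoc k mul unit
  ∧ IsCounitalCoassoc k comul counit
  ∧ counit ∘ₗ mul = (TensorProduct.lid k k).toLinearMap ∘ₗ TensorProduct.map counit counit
  ∧ comul ∘ₗ unit = TensorProduct.map unit unit ∘ₗ (TensorProduct.lid k k).symm.toLinearMap
  ∧ counit ∘ₗ unit = LinearMap.id
  ∧ comul ∘ₗ mul
      = TensorProduct.map mul mul ∘ₗ midMap k (TensorProduct.comm k A A).toLinearMap
          ∘ₗ TensorProduct.map comul comul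

/-- `(A, mul, unit, comul, counit)` is a Hopf algebra: a bialgebra with an antipode. -/
def IsHopf (mul : A ⊗[k] A →ₗ[k] A) (unit : k →ₗ[k] A)
    (comul : A →ₗ[k] A ⊗[k] A) (counit : A →ₗ[k] k) : Prop :=
  IsBialgebra k mul unit comul counit
  ∧ ∃ S : A →ₗ[k] A,
      mul ∘ₗ TensorProduct.map S LinearMap.id ∘ₗ comul = unit ∘ₗ counit
      ∧ mul ∘ₗ TensorProduct.map LinearMap.id S ∘ₗ comul = unit ∘ₗ counit

/-- `Γ` is a right inverse of the multiplication which is a bimodule morphism,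
witnessing separability of the algebra. -/
def IsSeparableWith (mul : A ⊗[k] A →ₗ[k] A) (Γ : A →ₗ[k] A ⊗[k] A) : Prop :=
  mul ∘ₗ Γ = LinearMap.id
  ∧ Γ ∘ₗ mul ∘ₗ TensorProduct.map LinearMap.id mul
      = TensorProduct.map mul mul
          ∘ₗ (TensorProduct.assoc k A A (A ⊗[k] A)).symm.toLinearMap
          ∘ₗ TensorProduct.map LinearMap.id (TensorProduct.assoc k A A A).toLinearMap
          ∘ₗ TensorProduct.map LinearMap.id (TensorProduct.map Γ LinearMap.id)

/-- The pairing `β` is associative: `β∘(1⊗∇) = β∘(∇⊗1)`. -/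
def PairingAssoc (mul : A ⊗[k] A →ₗ[k] A) (β : A ⊗[k] A →ₗ[k] k) : Prop :=
  β ∘ₗ TensorProduct.map LinearMap.id mul ∘ₗ (TensorProduct.assoc k A A A).toLinearMap
    = β ∘ₗ TensorProduct.map mul LinearMap.id

/-- The pairing `β` is non-degenerate with co-pairing `α`:
`(1⊗β)∘(α⊗1) = 1_A` under the canonical isomorphisms. -/
def PairingNondeg (β : A ⊗[k] A →ₗ[k] k) (α : k →ₗ[k] A ⊗[k] A) : Prop :=
  (TensorProduct.rid k A).toLinearMap
      ∘ₗ TensorProduct.map LinearMap.id β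
      ∘ₗ (TensorProduct.assoc k A A A).toLinearMap
      ∘ₗ TensorProduct.map α LinearMap.id
      ∘ₗ (TensorProduct.lid k A).symm.toLinearMap = LinearMap.id

/-- The pairing `β` is symmetric: `β ∘ σ = β` for the flip `σ`. -/
def PairingSymm (β : A ⊗[k] A →ₗ[k] k) : Prop :=
  β ∘ₗ (TensorProduct.comm k A A).toLinearMap = β

end Defs

end TTP


section Aux

variable {k : Type*} [Field k]
variable {X P Q Y R S : Type*}
  [AddCommGroup X] [Module k X] [AddCommGroup P] [Module k P]
  [AddCommGroup Q] [Module k Q] [AddCommGroup Y] [Module k Y]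
  [AddCommGroup R] [Module k R] [AddCommGroup S] [Module k S]

/-- The linear map `z = r ⊗ s ↦ (x ⊗ r) ⊗ (s ⊗ y)`. -/
noncomputable def reasmb (x : X) (y : Y) :
    R ⊗[k] S →ₗ[k] (X ⊗[k] R) ⊗[k] (S ⊗[k] Y) :=
  (TensorProduct.assoc k (X ⊗[k] R) S Y).toLinearMap
    ∘ₗ TensorProduct.map (TensorProduct.assoc k X R S).symm.toLinearMap LinearMap.id
    ∘ₗ (TensorProduct.mk k (X ⊗[k] (R ⊗[k] S)) Y).flip y
    ∘ₗ TensorProduct.mk k X (R ⊗[k] S) x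

@[simp] lemma reasmb_tmul (x : X) (y : Y) (r : R) (s : S) :
    reasmb (k := k) x y (r ⊗ₜ s) = (x ⊗ₜ r) ⊗ₜ (s ⊗ₜ y) := by
  simp [reasmb]

lemma midMap_tmul (f : P ⊗[k] Q →ₗ[k] R ⊗[k] S) (x : X) (p : P) (q : Q) (y : Y) :
    TTP.midMap k f ((x ⊗ₜ p) ⊗ₜ (q ⊗ₜ y)) = reasmb x y (f (p ⊗ₜ q)) := by
  simp [TTP.midMap, reasmb]

lemma midMap_reasmb (f : P ⊗[k] Q →ₗ[k] R ⊗[k] S) (x : X) (y : Y) :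
    TTP.midMap k f ∘ₗ (reasmb (k := k) x y : P ⊗[k] Q →ₗ[k] _)
      = reasmb x y ∘ₗ f := by
  apply TensorProduct.ext'
  intro p q
  simp [midMap_tmul]

end Aux

open TTP in
/-- Lemma 4.3 of the paper: if the twisted tensor product of
bialgebras is a bialgebra, then `(1⊗τ⁻¹⊗1)∘(Δ_A⊗Δ_B) = σ₂₃∘(Δ_A⊗Δ_B)` and
`(1⊗τ⊗1)∘(Δ_B⊗Δ_A) = σ₂₃∘(Δ_B⊗Δ_A)`. -/
theorem twistedTensorProduct_bialgebra_comul_flip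
    {k A B : Type*} [Field k]
    [AddCommGroup A] [Module k A] [AddCommGroup B] [Module k B]
    (mulA : A ⊗[k] A →ₗ[k] A) (unitA : k →ₗ[k] A)
    (comulA : A →ₗ[k] A ⊗[k] A) (counitA : A →ₗ[k] k)
    (mulB : B ⊗[k] B →ₗ[k] B) (unitB : k →ₗ[k] B)
    (comulB : B →ₗ[k] B ⊗[k] B) (counitB : B →ₗ[k] k)
    (hA : IsBialgebra k mulA unitA comulA counitA)
    (hB : IsBialgebra k mulB unitB comulB counitB)
    (τ : B ⊗[k] A ≃ₗ[k] A ⊗[k] B)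
    (hτ : IsTwisting k mulA unitA mulB unitB τ.toLinearMap)
    (hbialg : IsBialgebra k (tMul k mulA mulB τ.toLinearMap) (tUnit k unitA unitB)
        (tComul k comulA comulB τ.symm.toLinearMap) (tCounit k counitA counitB)) :
    midMap k τ.symm.toLinearMap ∘ₗ TensorProduct.map comulA comulB
      = midMap k (TensorProduct.comm k A B).toLinearMap ∘ₗ TensorProduct.map comulA comulB
    ∧ midMap k τ.toLinearMap ∘ₗ TensorProduct.map comulB comulA
      = midMap k (TensorProduct.comm k B A).toLinearMap ∘ₗ TensorProduct.map comulB comulA := by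

  obtain ⟨hAalg, hAco, -, hAcu, -, -⟩ := hA
  obtain ⟨hBalg, hBco, -, hBcu, -, -⟩ := hB
  obtain ⟨hτu1, hτu2, -⟩ := hτ
  have Hmain := hbialg.2.2.2.2.2
  -- elementwise unit facts
  have hmulA1 : ∀ a : A, mulA (a ⊗ₜ unitA 1) = a := fun a => by
    simpa using DFunLike.congr_fun hAalg.2.1 a
  have hmulB1 : ∀ b : B, mulB (unitB 1 ⊗ₜ b) = b := fun b => by
    simpa using DFunLike.congr_fun hBalg.1 b
  have hcomulA1 : comulA (unitA 1) = unitA 1 ⊗ₜ unitA 1 := by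
    simpa using DFunLike.congr_fun hAcu 1
  have hcomulB1 : comulB (unitB 1) = unitB 1 ⊗ₜ unitB 1 := by
    simpa using DFunLike.congr_fun hBcu 1
  have hτ1 : ∀ b : B, τ (b ⊗ₜ unitA 1) = unitA 1 ⊗ₜ b := fun b => by
    simpa using DFunLike.congr_fun hτu1 (b ⊗ₜ (1 : k))
  have hτ2 : ∀ a : A, τ (unitB 1 ⊗ₜ a) = a ⊗ₜ unitB 1 := fun a => by
    simpa using DFunLike.congr_fun hτu2 ((1 : k) ⊗ₜ a)
  have hτs1 : ∀ b : B, τ.symm (unitA 1 ⊗ₜ b) = b ⊗ₜ unitA 1 := fun b => by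
    rw [← hτ1 b]; exact τ.symm_apply_apply _
  have hτs2 : ∀ a : A, τ.symm (a ⊗ₜ unitB 1) = unitB 1 ⊗ₜ a := fun a => by
    rw [← hτ2 a]; exact τ.symm_apply_apply _
  -- the embeddings a ↦ a ⊗ 1 and b ↦ 1 ⊗ b
  set ιA : A →ₗ[k] A ⊗[k] B := (TensorProduct.mk k A B).flip (unitB 1) with hιA
  set ιB : B →ₗ[k] A ⊗[k] B := TensorProduct.mk k A B (unitA 1) with hιB
  have M1 : tMul k mulA mulB τ.toLinearMap ∘ₗ TensorProduct.map ιA ιB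
      = LinearMap.id := by
    apply TensorProduct.ext'
    intro a b
    simp [tMul, hιA, hιB, midMap_tmul, hτ2, hmulA1, hmulB1]
  have auxC1 : TTP.midMap k τ.symm.toLinearMap ∘ₗ
      (TensorProduct.mk k (A ⊗[k] A) (B ⊗[k] B)).flip (unitB 1 ⊗ₜ unitB 1)
      = TensorProduct.map ιA ιA := by
    apply TensorProduct.ext'
    intro a₁ a₂
    simp [midMap_tmul, hτs2, hιA]
  have C1 : tComul k comulA comulB τ.symm.toLinearMap ∘ₗ ιA
      = TensorProduct.map ιA ιA ∘ₗ comulA := by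
    apply LinearMap.ext; intro a
    have h := DFunLike.congr_fun auxC1 (comulA a)
    simpa [tComul, hιA, hcomulB1] using h
  have auxC2 : TTP.midMap k τ.symm.toLinearMap ∘ₗ
      TensorProduct.mk k (A ⊗[k] A) (B ⊗[k] B) (unitA 1 ⊗ₜ unitA 1)
      = TensorProduct.map ιB ιB := by
    apply TensorProduct.ext'
    intro b₁ b₂
    simp [midMap_tmul, hτs1, hιB]
  have C2 : tComul k comulA comulB τ.symm.toLinearMap ∘ₗ ιB
      = TensorProduct.map ιB ιB ∘ₗ comulB := by
    apply LinearMap.ext; intro b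
    have h := DFunLike.congr_fun auxC2 (comulB b)
    simpa [tComul, hιB, hcomulA1] using h
  have S1 : TTP.midMap k
        (TensorProduct.comm k (A ⊗[k] B) (A ⊗[k] B)).toLinearMap ∘ₗ
        TensorProduct.map (TensorProduct.map ιA ιA) (TensorProduct.map ιB ιB)
      = TensorProduct.map (TensorProduct.map ιA ιB) (TensorProduct.map ιA ιB) ∘ₗ
        TTP.midMap k (TensorProduct.comm k A B).toLinearMap := by
    apply TensorProduct.ext_fourfold'
    intro a₁ a₂ b₁ b₂
    simp [midMap_tmul, hιA, hιB]
  -- the comultiplication of the twisted product is σ₂₃ ∘ (Δ_A ⊗ Δ_B)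
  have G1 : tComul k comulA comulB τ.symm.toLinearMap
      = TTP.midMap k (TensorProduct.comm k A B).toLinearMap ∘ₗ
          TensorProduct.map comulA comulB := by
    calc tComul k comulA comulB τ.symm.toLinearMap
        = tComul k comulA comulB τ.symm.toLinearMap ∘ₗ
            (tMul k mulA mulB τ.toLinearMap ∘ₗ TensorProduct.map ιA ιB) := by
          rw [M1, LinearMap.comp_id]
      _ = (tComul k comulA comulB τ.symm.toLinearMap ∘ₗ
            tMul k mulA mulB τ.toLinearMap) ∘ₗ TensorProduct.map ιA ιB := by
          rw [LinearMap.comp_assoc]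
      _ = (TensorProduct.map (tMul k mulA mulB τ.toLinearMap)
              (tMul k mulA mulB τ.toLinearMap) ∘ₗ
            TTP.midMap k (TensorProduct.comm k (A ⊗[k] B) (A ⊗[k] B)).toLinearMap ∘ₗ
            TensorProduct.map (tComul k comulA comulB τ.symm.toLinearMap)
              (tComul k comulA comulB τ.symm.toLinearMap)) ∘ₗ
            TensorProduct.map ιA ιB := by
          rw [Hmain]
      _ = TensorProduct.map (tMul k mulA mulB τ.toLinearMap)
              (tMul k mulA mulB τ.toLinearMap) ∘ₗ
            TTP.midMap k (TensorProduct.comm k (A ⊗[k] B) (A ⊗[k] B)).toLinearMap ∘ₗ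
            (TensorProduct.map (tComul k comulA comulB τ.symm.toLinearMap)
              (tComul k comulA comulB τ.symm.toLinearMap) ∘ₗ
              TensorProduct.map ιA ιB) := by
          simp only [LinearMap.comp_assoc]
      _ = TensorProduct.map (tMul k mulA mulB τ.toLinearMap)
              (tMul k mulA mulB τ.toLinearMap) ∘ₗ
            TTP.midMap k (TensorProduct.comm k (A ⊗[k] B) (A ⊗[k] B)).toLinearMap ∘ₗ
            (TensorProduct.map (TensorProduct.map ιA ιA) (TensorProduct.map ιB ιB) ∘ₗ
              TensorProduct.map comulA comulB) := by
          rw [← TensorProduct.map_comp, C1, C2, TensorProduct.map_comp]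
      _ = (TensorProduct.map (tMul k mulA mulB τ.toLinearMap)
              (tMul k mulA mulB τ.toLinearMap) ∘ₗ
            (TTP.midMap k (TensorProduct.comm k (A ⊗[k] B) (A ⊗[k] B)).toLinearMap ∘ₗ
            TensorProduct.map (TensorProduct.map ιA ιA) (TensorProduct.map ιB ιB))) ∘ₗ
              TensorProduct.map comulA comulB := by
          simp only [LinearMap.comp_assoc]
      _ = (TensorProduct.map (tMul k mulA mulB τ.toLinearMap)
              (tMul k mulA mulB τ.toLinearMap) ∘ₗ
            (TensorProduct.map (TensorProduct.map ιA ιB) (TensorProduct.map ιA ιB) ∘ₗ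
              TTP.midMap k (TensorProduct.comm k A B).toLinearMap)) ∘ₗ
              TensorProduct.map comulA comulB := by
          rw [S1]
      _ = ((TensorProduct.map (tMul k mulA mulB τ.toLinearMap)
              (tMul k mulA mulB τ.toLinearMap) ∘ₗ
            TensorProduct.map (TensorProduct.map ιA ιB) (TensorProduct.map ιA ιB)) ∘ₗ
              TTP.midMap k (TensorProduct.comm k A B).toLinearMap) ∘ₗ
              TensorProduct.map comulA comulB := by
          simp only [LinearMap.comp_assoc]
      _ = TTP.midMap k (TensorProduct.comm k A B).toLinearMap ∘ₗ
              TensorProduct.map comulA comulB := by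
          rw [← TensorProduct.map_comp, M1, TensorProduct.map_id, LinearMap.id_comp]
  have Minv : TTP.midMap k τ.toLinearMap ∘ₗ TTP.midMap k τ.symm.toLinearMap
      = (LinearMap.id :
          (A ⊗[k] A) ⊗[k] (B ⊗[k] B) →ₗ[k] (A ⊗[k] A) ⊗[k] (B ⊗[k] B)) := by
    apply TensorProduct.ext_fourfold'
    intro a₁ a₂ b₁ b₂
    have h := DFunLike.congr_fun (midMap_reasmb (k := k) τ.toLinearMap a₁ b₂)
      (τ.symm (a₂ ⊗ₜ b₁))
    simp only [LinearMap.comp_apply] at h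
    simp [midMap_tmul, h]
  have I1 : TensorProduct.map comulA comulB
      = TTP.midMap k τ.toLinearMap ∘ₗ
          TTP.midMap k (TensorProduct.comm k A B).toLinearMap ∘ₗ
          TensorProduct.map comulA comulB := by
    have h := congrArg (fun F => TTP.midMap k τ.toLinearMap ∘ₗ F) G1
    simp only [tComul] at h
    rw [← LinearMap.comp_assoc, Minv, LinearMap.id_comp] at h
    exact h
  -- counit collapse maps
  set kA : A ⊗[k] A →ₗ[k] A :=
    (TensorProduct.lid k A).toLinearMap ∘ₗ TensorProduct.map counitA LinearMap.id
    with hkA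
  set kB : B ⊗[k] B →ₗ[k] B :=
    (TensorProduct.rid k B).toLinearMap ∘ₗ TensorProduct.map LinearMap.id counitB
    with hkB
  have KΔA : kA ∘ₗ comulA = LinearMap.id := by
    rw [hkA, LinearMap.comp_assoc]; exact hAco.1
  have KΔB : kB ∘ₗ comulB = LinearMap.id := by
    rw [hkB, LinearMap.comp_assoc]; exact hBco.2.1
  set gm : A ⊗[k] B →ₗ[k] B :=
    (TensorProduct.lid k B).toLinearMap ∘ₗ TensorProduct.map counitA LinearMap.id
    with hgm
  set hm : A ⊗[k] B →ₗ[k] A :=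
    (TensorProduct.rid k A).toLinearMap ∘ₗ TensorProduct.map LinearMap.id counitB
    with hhm
  have auxK : ∀ (a : A) (b' : B),
      TensorProduct.map kA kB ∘ₗ
        (reasmb (k := k) a b' : A ⊗[k] B →ₗ[k] (A ⊗[k] A) ⊗[k] (B ⊗[k] B))
      = (counitA a * counitB b') •
          (LinearMap.id : A ⊗[k] B →ₗ[k] A ⊗[k] B) := by
    intro a b'
    apply TensorProduct.ext'
    intro r s
    simp [hkA, hkB, TensorProduct.smul_tmul', TensorProduct.tmul_smul, smul_smul,
      mul_comm]
  have KM : TensorProduct.map kA kB ∘ₗ TTP.midMap k τ.toLinearMap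
      = τ.toLinearMap ∘ₗ TensorProduct.map gm hm := by
    apply TensorProduct.ext_fourfold'
    intro a b a' b'
    have h := DFunLike.congr_fun (auxK a b') (τ (b ⊗ₜ a'))
    simp only [LinearMap.comp_apply] at h
    simp [midMap_tmul, h, hgm, hhm, TensorProduct.smul_tmul',
      TensorProduct.tmul_smul, smul_smul, mul_comm]
    rw [← TensorProduct.smul_tmul', map_smul]
  have S2 : TensorProduct.map gm hm ∘ₗ
        TTP.midMap k (TensorProduct.comm k A B).toLinearMap
      = (TensorProduct.comm k A B).toLinearMap ∘ₗ TensorProduct.map kA kB := by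
    apply TensorProduct.ext_fourfold'
    intro a₁ a₂ b₁ b₂
    simp [midMap_tmul, hgm, hhm, hkA, hkB, TensorProduct.smul_tmul',
      TensorProduct.tmul_smul, smul_smul, mul_comm]
  have h0 : TensorProduct.map kA kB ∘ₗ TensorProduct.map comulA comulB
      = LinearMap.id := by
    rw [← TensorProduct.map_comp, KΔA, KΔB, TensorProduct.map_id]
  have Hfin : τ.toLinearMap ∘ₗ (TensorProduct.comm k A B).toLinearMap
      = LinearMap.id := by
    calc τ.toLinearMap ∘ₗ (TensorProduct.comm k A B).toLinearMap
        = τ.toLinearMap ∘ₗ (TensorProduct.comm k A B).toLinearMap ∘ₗ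
            (TensorProduct.map kA kB ∘ₗ TensorProduct.map comulA comulB) := by
          rw [h0, LinearMap.comp_id]
      _ = τ.toLinearMap ∘ₗ ((TensorProduct.comm k A B).toLinearMap ∘ₗ
            TensorProduct.map kA kB) ∘ₗ TensorProduct.map comulA comulB := by
          simp only [LinearMap.comp_assoc]
      _ = τ.toLinearMap ∘ₗ (TensorProduct.map gm hm ∘ₗ
            TTP.midMap k (TensorProduct.comm k A B).toLinearMap) ∘ₗ
            TensorProduct.map comulA comulB := by
          rw [S2]
      _ = (τ.toLinearMap ∘ₗ TensorProduct.map gm hm) ∘ₗ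
            TTP.midMap k (TensorProduct.comm k A B).toLinearMap ∘ₗ
            TensorProduct.map comulA comulB := by
          simp only [LinearMap.comp_assoc]
      _ = (TensorProduct.map kA kB ∘ₗ TTP.midMap k τ.toLinearMap) ∘ₗ
            TTP.midMap k (TensorProduct.comm k A B).toLinearMap ∘ₗ
            TensorProduct.map comulA comulB := by
          rw [KM]
      _ = TensorProduct.map kA kB ∘ₗ (TTP.midMap k τ.toLinearMap ∘ₗ
            TTP.midMap k (TensorProduct.comm k A B).toLinearMap ∘ₗ
            TensorProduct.map comulA comulB) := by
          simp only [LinearMap.comp_assoc]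
      _ = TensorProduct.map kA kB ∘ₗ TensorProduct.map comulA comulB := by
          rw [← I1]
      _ = LinearMap.id := h0
  have hτflip : ∀ (b : B) (a : A), τ (b ⊗ₜ a) = a ⊗ₜ b := fun b a => by
    simpa using DFunLike.congr_fun Hfin (a ⊗ₜ b)
  have hτl : τ.toLinearMap = (TensorProduct.comm k B A).toLinearMap := by
    apply TensorProduct.ext'
    intro b a
    simp [hτflip]
  have hτsl : τ.symm.toLinearMap = (TensorProduct.comm k A B).toLinearMap := by
    apply TensorProduct.ext'
    intro a b
    simp only [LinearEquiv.coe_coe, TensorProduct.comm_tmul]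
    apply τ.injective
    simp [hτflip]
  exact ⟨by rw [hτsl], by rw [hτl]⟩
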